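/- For every cardinal κ ≥ 2, the 2-partite digraph M_κ is homogeneous. -/

import Mathlib

/-
An `M_κ` is a double cover of its side `X`: every vertex `v` lies over the point `proj v` of `X`
(itself if `v ∈ X`, its matching partner if `v ∈ Y`), and the edge relation is read off from
the sides of the two endpoints and whether they lie over the same point. Hence every permutation
`σ` of `X`, applied fibrewise, is an automorphism. A finite partial isomorphism `φ` preserves
sides, equality and matching edges, i.e. it respects the relation "lies over the same point", so
it induces a finite partial injection of `X`; extending that to a permutation `σ` of `X`, the
fibrewise lift of `σ` extends `φ`.
-/

/-- A 2-partite digraph `D = (X, Y, E)`: `X` and `Y` are disjoint sets covering the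
vertex set, every edge goes between the two sides, and no two opposite edges exist. -/
structure TwoPartiteDigraph (V : Type*) where
  X : Set V
  Y : Set V
  cover : X ∪ Y = Set.univ
  disj : Disjoint X Y
  E : V → V → Prop
  mem_of_edge : ∀ u v, E u v → (u ∈ X ∧ v ∈ Y) ∨ (u ∈ Y ∧ v ∈ X)
  not_opposite : ∀ u v, E u v → ¬ E v u

namespace TwoPartiteDigraph

variable {V V₁ V₂ : Type*}

/-- Out-neighbourhood (successors). -/
def Nplus (D : TwoPartiteDigraph V) (v : V) : Set V := {w | D.E v w}

/-- In-neighbourhood (predecessors). -/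
def Nminus (D : TwoPartiteDigraph V) (v : V) : Set V := {w | D.E w v}

/-- Adjacency in the underlying undirected bipartite graph. -/
def Adj (D : TwoPartiteDigraph V) (u v : V) : Prop := D.E u v ∨ D.E v u

/-- `v^⊥`: the vertices on the other side not adjacent to `v`. -/
def perp (D : TwoPartiteDigraph V) (v : V) : Set V :=
  {w | ((v ∈ D.X ∧ w ∈ D.Y) ∨ (v ∈ D.Y ∧ w ∈ D.X)) ∧ ¬ D.Adj v w}

/-- `D` is bipartite if all edges go from `X` to `Y`, or all from `Y` to `X`. -/
def Bipartite (D : TwoPartiteDigraph V) : Prop :=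
  (∀ u v, D.E u v → u ∈ D.X) ∨ (∀ u v, D.E u v → u ∈ D.Y)

/-- `φ` is an isomorphism between the subdigraphs induced on `A` and on `φ '' A`,
respecting the bipartition. -/
def IsPartialIso (D : TwoPartiteDigraph V) (A : Set V) (φ : V → V) : Prop :=
  Set.InjOn φ A ∧ (∀ a ∈ A, (a ∈ D.X ↔ φ a ∈ D.X)) ∧ (∀ a ∈ A, (a ∈ D.Y ↔ φ a ∈ D.Y)) ∧
  ∀ a ∈ A, ∀ b ∈ A, (D.E a b ↔ D.E (φ a) (φ b))

/-- A bipartition-preserving automorphism of `D`. -/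
def IsAuto (D : TwoPartiteDigraph V) (α : Equiv.Perm V) : Prop :=
  (∀ v, v ∈ D.X ↔ α v ∈ D.X) ∧ (∀ v, v ∈ D.Y ↔ α v ∈ D.Y) ∧
  ∀ u v, D.E u v ↔ D.E (α u) (α v)

/-- `D` is homogeneous: every isomorphism between finite induced subdigraphs respecting
the bipartition extends to a bipartition-preserving automorphism of `D`. -/
def Homogeneous (D : TwoPartiteDigraph V) : Prop :=
  ∀ A : Set V, A.Finite → ∀ φ : V → V, D.IsPartialIso A φ →
    ∃ α : Equiv.Perm V, D.IsAuto α ∧ ∀ a ∈ A, α a = φ a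

/-- The underlying undirected bipartite graph is complete bipartite. -/
def CompleteBip (D : TwoPartiteDigraph V) : Prop := ∀ x ∈ D.X, ∀ y ∈ D.Y, D.Adj x y

/-- `D` is a generic 2-partite digraph. -/
def IsGeneric (D : TwoPartiteDigraph V) : Prop :=
  D.CompleteBip ∧
  ∀ AX BX : Set V, AX.Finite → BX.Finite → AX ⊆ D.X → BX ⊆ D.X → Disjoint AX BX →
  ∀ AY BY : Set V, AY.Finite → BY.Finite → AY ⊆ D.Y → BY ⊆ D.Y → Disjoint AY BY →
    (∃ y ∈ D.Y, AX ⊆ D.Nplus y ∧ BX ⊆ D.Nminus y) ∧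
    (∃ x ∈ D.X, AY ⊆ D.Nplus x ∧ BY ⊆ D.Nminus x)

/-- `D` is a generic orientation of a generic bipartite graph. -/
def IsGenericOrientation (D : TwoPartiteDigraph V) : Prop :=
  ∀ AX BX CX : Set V, AX.Finite → BX.Finite → CX.Finite →
    AX ⊆ D.X → BX ⊆ D.X → CX ⊆ D.X →
    Disjoint AX BX → Disjoint AX CX → Disjoint BX CX →
  ∀ AY BY CY : Set V, AY.Finite → BY.Finite → CY.Finite →
    AY ⊆ D.Y → BY ⊆ D.Y → CY ⊆ D.Y →
    Disjoint AY BY → Disjoint AY CY → Disjoint BY CY →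
    (∃ y ∈ D.Y, AX ⊆ D.Nplus y ∧ BX ⊆ D.Nminus y ∧ CX ⊆ D.perp y) ∧
    (∃ x ∈ D.X, AY ⊆ D.Nplus x ∧ BY ⊆ D.Nminus x ∧ CY ⊆ D.perp x)

/-- `D` is (a copy of) `M_κ` with the matching oriented from `X` to `Y`:
there is a bijection `m : X → Y` such that the edges from `X` to `Y` form the
perfect matching `{(x, m x)}` and the edges from `Y` to `X` form its bipartite
complement. -/
def IsMFixed (D : TwoPartiteDigraph V) : Prop :=
  ∃ m : V → V, Set.BijOn m D.X D.Y ∧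
    (∀ x ∈ D.X, ∀ y ∈ D.Y, (D.E x y ↔ y = m x)) ∧
    (∀ x ∈ D.X, ∀ y ∈ D.Y, (D.E y x ↔ y ≠ m x))

/-- `D` is (a copy of) `M_κ`: one of the two directed parts is a perfect matching and
the other is the bipartite complement of a perfect matching. -/
def IsM (D : TwoPartiteDigraph V) : Prop :=
  ∃ m : V → V, Set.BijOn m D.X D.Y ∧
    ((∀ x ∈ D.X, ∀ y ∈ D.Y, (D.E x y ↔ y = m x) ∧ (D.E y x ↔ y ≠ m x)) ∨
     (∀ x ∈ D.X, ∀ y ∈ D.Y, (D.E y x ↔ y = m x) ∧ (D.E x y ↔ y ≠ m x)))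

/-- Isomorphism of 2-partite digraphs respecting the bipartitions. -/
def Isomorphic (D₁ : TwoPartiteDigraph V₁) (D₂ : TwoPartiteDigraph V₂) : Prop :=
  ∃ e : V₁ ≃ V₂, (∀ v, v ∈ D₁.X ↔ e v ∈ D₂.X) ∧ (∀ v, v ∈ D₁.Y ↔ e v ∈ D₂.Y) ∧
    ∀ u v, D₁.E u v ↔ D₂.E (e u) (e v)

/-- `φ` is an isomorphism of finite induced subgraphs of the underlying undirected
bipartite graph, respecting the bipartition. -/
def IsGraphPartialIso (D : TwoPartiteDigraph V) (A : Set V) (φ : V → V) : Prop :=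
  Set.InjOn φ A ∧ (∀ a ∈ A, (a ∈ D.X ↔ φ a ∈ D.X)) ∧ (∀ a ∈ A, (a ∈ D.Y ↔ φ a ∈ D.Y)) ∧
  ∀ a ∈ A, ∀ b ∈ A, (D.Adj a b ↔ D.Adj (φ a) (φ b))

/-- The underlying undirected bipartite graph of `D` is homogeneous. -/
def GraphHomogeneous (D : TwoPartiteDigraph V) : Prop :=
  ∀ A : Set V, A.Finite → ∀ φ : V → V, D.IsGraphPartialIso A φ →
    ∃ α : Equiv.Perm V, ((∀ v, v ∈ D.X ↔ α v ∈ D.X) ∧ (∀ v, v ∈ D.Y ↔ α v ∈ D.Y) ∧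
      ∀ u v, D.Adj u v ↔ D.Adj (α u) (α v)) ∧ ∀ a ∈ A, α a = φ a

/-- The underlying undirected bipartite graph of `D` is generic. -/
def UnderlyingGeneric (D : TwoPartiteDigraph V) : Prop :=
  ∀ UX VX : Set V, UX.Finite → VX.Finite → UX ⊆ D.X → VX ⊆ D.X → Disjoint UX VX →
  ∀ UY VY : Set V, UY.Finite → VY.Finite → UY ⊆ D.Y → VY ⊆ D.Y → Disjoint UY VY →
    (∃ y ∈ D.Y, (∀ u ∈ UX, D.Adj y u) ∧ ∀ v ∈ VX, ¬ D.Adj y v) ∧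
    (∃ x ∈ D.X, (∀ u ∈ UY, D.Adj x u) ∧ ∀ v ∈ VY, ¬ D.Adj x v)

end TwoPartiteDigraph

open TwoPartiteDigraph

theorem Equiv.Perm.exists_extend_of_finite {α β : Type*} {A : Set α} (hA : A.Finite)
    {p q : α → β} (hpq : ∀ a ∈ A, ∀ b ∈ A, p a = p b ↔ q a = q b) :
    ∃ σ : Equiv.Perm β, ∀ a ∈ A, σ (p a) = q a := by
  have hpA : ∀ y ∈ p '' A, ∃ a ∈ A, p a = y := fun _ hy => hy
  choose s hsA hps using hpA
  let f : p '' A ↪ β :=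
    ⟨fun y => q (s y y.2), fun y z h => Subtype.ext <| by
      rw [← hps y y.2, ← hps z z.2]
      exact (hpq _ (hsA y y.2) _ (hsA z z.2)).mpr h⟩
  have hf : ∀ a (ha : a ∈ A), f ⟨p a, Set.mem_image_of_mem p ha⟩ = q a := fun a ha =>
    (hpq _ (hsA _ ⟨a, ha, rfl⟩) a ha).mp (hps _ ⟨a, ha, rfl⟩)
  obtain ⟨σ, hσ⟩ : ∃ σ : β ≃ β, ∀ y : p '' A, σ y = f y := by
    rcases finite_or_infinite β with hβ | hβ
    · exact Cardinal.extend_function_finite f ⟨Equiv.refl β⟩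
    · exact Cardinal.extend_function_of_lt f
        ((hA.image p).lt_aleph0.trans_le (Cardinal.infinite_iff.mp hβ)) ⟨Equiv.refl β⟩
  exact ⟨σ, fun a ha => (hσ ⟨p a, Set.mem_image_of_mem p ha⟩).trans (hf a ha)⟩

namespace TwoPartiteDigraph

variable {V : Type*} (D : TwoPartiteDigraph V)

theorem mem_Y_iff_notMem_X {v : V} : v ∈ D.Y ↔ v ∉ D.X :=
  ⟨fun hY hX => Set.disjoint_left.mp D.disj hX hY,
    fun hX => ((Set.eq_univ_iff_forall.mp D.cover) v).resolve_left hX⟩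

theorem mem_X_iff_notMem_X_of_E {u v : V} (h : D.E u v) : u ∈ D.X ↔ v ∉ D.X := by
  have := D.mem_of_edge u v h
  simp only [mem_Y_iff_notMem_X] at this
  tauto

structure IsMMatching (m : V → V) : Prop where
  bijOn : Set.BijOn m D.X D.Y
  E_iff_eq : ∀ x ∈ D.X, ∀ y ∈ D.Y, D.E x y ↔ y = m x
  E_iff_ne : ∀ x ∈ D.X, ∀ y ∈ D.Y, D.E y x ↔ y ≠ m x

namespace IsMMatching

variable {D} {m : V → V} (hm : D.IsMMatching m)

noncomputable def equivCompl : D.X ≃ {v // v ∉ D.X} :=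
  (hm.bijOn.equiv m).trans (Equiv.subtypeEquivRight fun _ => D.mem_Y_iff_notMem_X)

theorem coe_equivCompl (x : D.X) : (hm.equivCompl x : V) = m x := rfl

open Classical in
noncomputable def proj (v : V) : D.X :=
  if h : v ∈ D.X then ⟨v, h⟩ else hm.equivCompl.symm ⟨v, h⟩

theorem proj_of_mem {v : V} (h : v ∈ D.X) : hm.proj v = ⟨v, h⟩ := dif_pos h

theorem proj_of_notMem {v : V} (h : v ∉ D.X) : hm.proj v = hm.equivCompl.symm ⟨v, h⟩ :=
  dif_neg h

theorem apply_proj_of_notMem {v : V} (h : v ∉ D.X) : m (hm.proj v) = v := by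
  rw [hm.proj_of_notMem h, ← hm.coe_equivCompl, Equiv.apply_symm_apply]

theorem apply_notMem (hm : D.IsMMatching m) (x : D.X) : m x ∉ D.X :=
  D.mem_Y_iff_notMem_X.mp (hm.bijOn.mapsTo x.2)

theorem eq_of_proj_eq {u v : V} (huv : u ∈ D.X ↔ v ∈ D.X) (h : hm.proj u = hm.proj v) :
    u = v := by
  by_cases hu : u ∈ D.X
  · have hv := huv.mp hu
    rwa [hm.proj_of_mem hu, hm.proj_of_mem hv, Subtype.mk.injEq] at h
  · have hv := mt huv.mpr hu
    rw [← hm.apply_proj_of_notMem hu, ← hm.apply_proj_of_notMem hv, h]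

theorem proj_eq_proj_iff_of_mem_of_notMem {x v : V} (hx : x ∈ D.X) (hv : v ∉ D.X) :
    hm.proj x = hm.proj v ↔ v = m x := by
  rw [Subtype.ext_iff, ← hm.bijOn.injOn.eq_iff (hm.proj x).2 (hm.proj v).2,
    hm.apply_proj_of_notMem hv, hm.proj_of_mem hx, eq_comm]

theorem E_iff_proj {u v : V} :
    D.E u v ↔ (u ∈ D.X ∧ v ∉ D.X ∧ hm.proj u = hm.proj v) ∨
      (u ∉ D.X ∧ v ∈ D.X ∧ hm.proj u ≠ hm.proj v) := by
  by_cases hu : u ∈ D.X <;> by_cases hv : v ∈ D.X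
  · simpa [hu, hv] using mt (D.mem_X_iff_notMem_X_of_E (u := u) (v := v)) (by tauto)
  · simp only [hu, hv, hm.proj_eq_proj_iff_of_mem_of_notMem hu hv]
    simpa using hm.E_iff_eq u hu v ((D.mem_Y_iff_notMem_X).mpr hv)
  · rw [ne_comm, ne_eq, hm.proj_eq_proj_iff_of_mem_of_notMem hv hu]
    simpa [hu, hv] using hm.E_iff_ne v hv u ((D.mem_Y_iff_notMem_X).mpr hu)
  · simpa [hu, hv] using mt (D.mem_X_iff_notMem_X_of_E (u := u) (v := v)) (by tauto)

theorem proj_eq_proj_iff {u v : V} :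
    hm.proj u = hm.proj v ↔ u = v ∨ (u ∈ D.X ∧ D.E u v) ∨ (v ∈ D.X ∧ D.E v u) := by
  constructor
  · intro h
    by_cases huv : u ∈ D.X ↔ v ∈ D.X
    · exact Or.inl (hm.eq_of_proj_eq huv h)
    · by_cases hu : u ∈ D.X
      · exact Or.inr (Or.inl ⟨hu, hm.E_iff_proj.mpr (Or.inl ⟨hu, by tauto, h⟩)⟩)
      · exact Or.inr (Or.inr ⟨by tauto, hm.E_iff_proj.mpr (Or.inl ⟨by tauto, hu, h.symm⟩)⟩)
  · rintro (rfl | ⟨hu, huv⟩ | ⟨hv, hvu⟩)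
    · rfl
    · exact ((hm.E_iff_proj.mp huv).resolve_right fun h => h.1 hu).2.2
    · exact ((hm.E_iff_proj.mp hvu).resolve_right fun h => h.1 hv).2.2.symm

theorem proj_apply_eq_proj_apply_iff {A : Set V} {φ : V → V} (hφ : D.IsPartialIso A φ)
    {a b : V} (ha : a ∈ A) (hb : b ∈ A) :
    hm.proj (φ a) = hm.proj (φ b) ↔ hm.proj a = hm.proj b := by
  rw [hm.proj_eq_proj_iff, hm.proj_eq_proj_iff, hφ.1.eq_iff ha hb, ← hφ.2.1 a ha,
    ← hφ.2.1 b hb, ← hφ.2.2.2 a ha b hb, ← hφ.2.2.2 b hb a ha]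

open Classical in
noncomputable def liftPerm (σ : Equiv.Perm D.X) : Equiv.Perm V :=
  σ.subtypeCongr (hm.equivCompl.permCongr σ)

theorem liftPerm_of_mem (σ : Equiv.Perm D.X) {v : V} (hv : v ∈ D.X) :
    hm.liftPerm σ v = σ ⟨v, hv⟩ := by
  classical exact Equiv.Perm.subtypeCongr.left_apply _ _ hv

theorem liftPerm_of_notMem (σ : Equiv.Perm D.X) {v : V} (hv : v ∉ D.X) :
    hm.liftPerm σ v = m (σ (hm.proj v)) := by
  rw [hm.proj_of_notMem hv]
  classical exact Equiv.Perm.subtypeCongr.right_apply _ _ hv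

theorem liftPerm_mem_iff (σ : Equiv.Perm D.X) {v : V} : hm.liftPerm σ v ∈ D.X ↔ v ∈ D.X := by
  by_cases hv : v ∈ D.X
  · exact iff_of_true (hm.liftPerm_of_mem σ hv ▸ (σ ⟨v, hv⟩).2) hv
  · exact iff_of_false (hm.liftPerm_of_notMem σ hv ▸ hm.apply_notMem _) hv

theorem proj_apply_coe (x : D.X) : hm.proj (m x) = x :=
  ((hm.proj_eq_proj_iff_of_mem_of_notMem x.2 (hm.apply_notMem x)).mpr rfl).symm.trans
    (hm.proj_of_mem x.2)

theorem proj_liftPerm (σ : Equiv.Perm D.X) (v : V) :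
    hm.proj (hm.liftPerm σ v) = σ (hm.proj v) := by
  by_cases hv : v ∈ D.X
  · rw [hm.liftPerm_of_mem σ hv, hm.proj_of_mem (σ _).2, hm.proj_of_mem hv]
  · rw [hm.liftPerm_of_notMem σ hv, hm.proj_apply_coe]

theorem isAuto_liftPerm (σ : Equiv.Perm D.X) : D.IsAuto (hm.liftPerm σ) := by
  refine ⟨fun v => (hm.liftPerm_mem_iff σ).symm, fun v => ?_, fun u v => ?_⟩
  · simp only [mem_Y_iff_notMem_X, hm.liftPerm_mem_iff]
  · simp only [hm.E_iff_proj, hm.liftPerm_mem_iff, hm.proj_liftPerm, ne_eq, σ.injective.eq_iff]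

end IsMMatching

end TwoPartiteDigraph

theorem stmt_13_general {V : Type*} (D : TwoPartiteDigraph V) (hM : D.IsMFixed) : D.Homogeneous := by
  obtain ⟨m, hbij, hXY, hYX⟩ := hM
  have hm : D.IsMMatching m := ⟨hbij, hXY, hYX⟩
  intro A hA φ hφ
  obtain ⟨σ, hσ⟩ := Equiv.Perm.exists_extend_of_finite hA (p := hm.proj) (q := hm.proj ∘ φ)
    fun a ha b hb => (hm.proj_apply_eq_proj_apply_iff hφ ha hb).symm
  refine ⟨hm.liftPerm σ, hm.isAuto_liftPerm σ, fun a ha => hm.eq_of_proj_eq ?_ ?_⟩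
  · rw [hm.liftPerm_mem_iff]
    exact hφ.2.1 a ha
  · rw [hm.proj_liftPerm, hσ a ha, Function.comp_apply]

/-- For every cardinal `κ ≥ 2`, the 2-partite digraph `M_κ` is homogeneous. -/
theorem stmt_13 {V : Type*} (D : TwoPartiteDigraph V) (hM : D.IsMFixed)
    (hκ : 2 ≤ Cardinal.mk D.X) : D.Homogeneous :=
  stmt_13_general D hM
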